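/- arXiv:1608.03871 — 2 statements merged into one kernel-verified Lean document; each statement's English description precedes it below -/
import Mathlib

section
/- Let M be an n×n Hermitian matrix such that every 2×2 principal submatrix indexed by an edge of a cycle C satisfies M restricted to that edge equals v_i v_j^H for some local rank-one completion, i.e., for each edge (i,j) of C there is a vector v^{(i,j)} ∈ ℂ^n with M_{kk} = |v_k^{(i,j)}|² for k ∈ {i,j} and M_{lm} = v_l^{(i,j)} (v_m^{(i,j)})^H for (l,m) ∈ {(i,j),(j,i)}. If additionally the sum of arg(M_{ij}) over an orientation of C is congruent to 0 modulo 2π, then there exists v ∈ ℂ^n with M_{ii} = |v_i|² and M_{ij} = v_i \overline{v_j} for all vertices i and edges (i,j) of C. -/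
/-!
Write `r i = √M_ii`. The local completions give `|M_ij| = r_i r_j` on every edge, so it suffices to
find phases `θ : V → ℝ/2πℤ` with `θ_i - θ_j = arg M_ij` along the cycle, and then take
`u_i = r_i e^{iθ_i}`. Along a path such phases are built one vertex at a time from the far end;
closing the path into the cycle is consistent exactly when the arguments sum to `0` modulo `2π`.
-/

open ComplexConjugate

namespace SimpleGraph.Walk

variable {V : Type*} {G : SimpleGraph V}

theorem exists_mem_darts_of_mem_support {u v x : V} {p : G.Walk u v} (hp : ¬p.Nil)
    (hx : x ∈ p.support) : ∃ d ∈ p.darts, d.fst = x ∨ d.snd = x := by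
  obtain ⟨e, he, hxe⟩ := (mem_support_iff_exists_mem_edges_of_not_nil hp).1 hx
  obtain ⟨d, hd, rfl⟩ := List.mem_map.1 he
  exact ⟨d, hd, by simpa [Dart.edge, eq_comm] using hxe⟩

variable {A : Type*} [DecidableEq V] [AddCommGroup A]

theorem IsPath.exists_potential {a b : V} {p : G.Walk a b} (hp : p.IsPath) (α : G.Dart → A) :
    ∃ θ : V → A, (∀ d ∈ p.darts, θ d.fst - θ d.snd = α d) ∧ θ b = 0 ∧
      θ a = (p.darts.map α).sum := by
  induction p with
  | nil => exact ⟨0, by simp, rfl, rfl⟩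
  | @cons a w b h q ih =>
    obtain ⟨hq, ha⟩ := (cons_isPath_iff h q).1 hp
    obtain ⟨θ, hθ, hθb, hθw⟩ := ih hq
    have hne : ∀ x ∈ q.support, x ≠ a := fun x hx hxa => ha (hxa ▸ hx)
    refine ⟨Function.update θ a (α ⟨(a, w), h⟩ + θ w), ?_, ?_, ?_⟩
    · simp only [darts_cons, List.mem_cons, forall_eq_or_imp]
      refine ⟨by simp [h.ne.symm], fun d hd => ?_⟩
      rw [Function.update_of_ne (hne _ (q.dart_fst_mem_support_of_mem_darts hd)),
        Function.update_of_ne (hne _ (q.dart_snd_mem_support_of_mem_darts hd)), hθ d hd]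
    · rw [Function.update_of_ne (hne _ q.end_mem_support), hθb]
    · simp [hθw]

theorem IsCycle.exists_potential {v : V} {c : G.Walk v v} (hc : c.IsCycle) (α : G.Dart → A)
    (hα : (c.darts.map α).sum = 0) : ∃ θ : V → A, ∀ d ∈ c.darts, θ d.fst - θ d.snd = α d := by
  cases c with
  | nil => exact absurd hc not_isCycle_nil
  | cons h p =>
    obtain ⟨θ, hθ, hθv, hθw⟩ := ((cons_isCycle_iff p h).1 hc).1.exists_potential α
    refine ⟨θ, ?_⟩
    simp only [darts_cons, List.mem_cons, forall_eq_or_imp]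
    refine ⟨?_, hθ⟩
    rw [darts_cons, List.map_cons, List.sum_cons] at hα
    rw [hθv, hθw, zero_sub, ← eq_neg_of_add_eq_zero_left hα]

end SimpleGraph.Walk

namespace Complex

theorem sqrt_re_of_eq_norm_sq {z w : ℂ} (h : z = (‖w‖ : ℂ) ^ 2) : √z.re = ‖w‖ := by
  rw [h, ← ofReal_pow, ofReal_re, Real.sqrt_sq (norm_nonneg _)]

theorem eq_mul_conj_of_norm_eq_of_sub_eq_arg {x : ℂ} {r s : ℝ} {φ ψ : Real.Angle}
    (hx : ‖x‖ = r * s) (h : φ - ψ = x.arg) :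
    x = r * (φ.toCircle : ℂ) * conj (s * (ψ.toCircle : ℂ)) := by
  rw [sub_eq_iff_eq_add.1 h, Real.Angle.toCircle_add, map_mul, conj_ofReal,
    ← Circle.coe_inv_eq_conj, Real.Angle.toCircle_coe, Circle.coe_mul, Circle.coe_exp]
  have hψ : (ψ.toCircle : ℂ) * (ψ.toCircle⁻¹ : Circle) = 1 := by
    rw [← Circle.coe_mul, mul_inv_cancel, Circle.coe_one]
  calc x = ‖x‖ * exp (x.arg * I) := (norm_mul_exp_arg_mul_I x).symm
    _ = _ := by
      rw [hx, ofReal_mul]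
      linear_combination (-(r : ℂ) * s * exp (x.arg * I)) * hψ

end Complex

theorem stmt_9_general {n : ℕ} (M : Matrix (Fin n) (Fin n) ℂ)
    (G : SimpleGraph (Fin n)) {v : Fin n} (c : G.Walk v v) (hc : c.IsCycle)
    (hloc : ∀ d ∈ c.darts, ∃ w : Fin n → ℂ,
      M d.fst d.fst = (‖w d.fst‖ : ℂ) ^ 2 ∧
      M d.snd d.snd = (‖w d.snd‖ : ℂ) ^ 2 ∧
      M d.fst d.snd = w d.fst * starRingEnd ℂ (w d.snd) ∧
      M d.snd d.fst = w d.snd * starRingEnd ℂ (w d.fst))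
    (hsum : ∃ k : ℤ, (c.darts.map fun d => (M d.fst d.snd).arg).sum = 2 * Real.pi * k) :
    ∃ u : Fin n → ℂ,
      (∀ i ∈ c.support, M i i = (‖u i‖ : ℂ) ^ 2) ∧
      ∀ d ∈ c.darts, M d.fst d.snd = u d.fst * starRingEnd ℂ (u d.snd) := by
  set r : Fin n → ℝ := fun i => √(M i i).re
  have hedge : ∀ d ∈ c.darts, M d.fst d.fst = (r d.fst : ℂ) ^ 2 ∧
      M d.snd d.snd = (r d.snd : ℂ) ^ 2 ∧ ‖M d.fst d.snd‖ = r d.fst * r d.snd := by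
    intro d hd
    obtain ⟨w, h₁, h₂, h₁₂, -⟩ := hloc d hd
    simp only [r, Complex.sqrt_re_of_eq_norm_sq h₁, Complex.sqrt_re_of_eq_norm_sq h₂]
    exact ⟨h₁, h₂, by rw [h₁₂, norm_mul, Complex.norm_conj]⟩
  have hsum_angle : (c.darts.map fun d => ((M d.fst d.snd).arg : Real.Angle)).sum = 0 := by
    have hcoe : (c.darts.map fun d => ((M d.fst d.snd).arg : Real.Angle)).sum =
        ((c.darts.map fun d => (M d.fst d.snd).arg).sum : ℝ) := by
      rw [← Real.Angle.coe_coeHom, map_list_sum, List.map_map]; rfl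
    rw [hcoe, ← Real.Angle.coe_zero, Real.Angle.angle_eq_iff_two_pi_dvd_sub]
    simpa using hsum
  obtain ⟨θ, hθ⟩ := hc.exists_potential _ hsum_angle
  have hnorm : ∀ i, ‖(r i : ℂ) * (θ i).toCircle‖ = r i := by simp [r, Circle.norm_coe]
  refine ⟨fun i => r i * (θ i).toCircle, fun i hi => ?_, fun d hd =>
    Complex.eq_mul_conj_of_norm_eq_of_sub_eq_arg (hedge d hd).2.2 (hθ d hd)⟩
  rw [hnorm]
  obtain ⟨d, hd, rfl | rfl⟩ := c.exists_mem_darts_of_mem_support hc.not_nil hi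
  exacts [(hedge d hd).1, (hedge d hd).2.1]

/-- Matrix completion over a cycle: let `M` be an `n × n` Hermitian matrix whose entries on
the edges of a cycle `C` are nonzero, such that for each edge `(i, j)` of `C` there is a local
rank-one completion `w` with `M_{kk} = |w_k|²` for `k ∈ {i, j}`, `M_{ij} = w_i conj (w_j)` and
`M_{ji} = w_j conj (w_i)`.  If the sum of `arg M_{ij}` over an orientation of `C` is congruent
to `0` modulo `2π`, then there is a vector `u` with `M_{ii} = |u_i|²` for all vertices `i` of
`C` and `M_{ij} = u_i conj (u_j)` for all edges `(i, j)` of `C`. -/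
theorem stmt_9 {n : ℕ} (M : Matrix (Fin n) (Fin n) ℂ) (hM : M.IsHermitian)
    (G : SimpleGraph (Fin n)) {v : Fin n} (c : G.Walk v v) (hc : c.IsCycle)
    (hnz : ∀ d ∈ c.darts, M d.fst d.snd ≠ 0)
    (hloc : ∀ d ∈ c.darts, ∃ w : Fin n → ℂ,
      M d.fst d.fst = (‖w d.fst‖ : ℂ) ^ 2 ∧
      M d.snd d.snd = (‖w d.snd‖ : ℂ) ^ 2 ∧
      M d.fst d.snd = w d.fst * starRingEnd ℂ (w d.snd) ∧
      M d.snd d.fst = w d.snd * starRingEnd ℂ (w d.fst))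
    (hsum : ∃ k : ℤ, (c.darts.map fun d => (M d.fst d.snd).arg).sum = 2 * Real.pi * k) :
    ∃ u : Fin n → ℂ,
      (∀ i ∈ c.support, M i i = (‖u i‖ : ℂ) ^ 2) ∧
      ∀ d ∈ c.darts, M d.fst d.snd = u d.fst * starRingEnd ℂ (u d.snd) :=
  stmt_9_general M G c hc hloc hsum
end

section
/- Suppose f, g₁, …, g_m : ℂ^n → ℝ are real-valued complex polynomials, z^opt is a global minimizer of f over K = {z : g_i(z) ≥ 0 for all i}, and σ₀^opt, …, σ_m^opt ∈ Σ[z] are sums of squared moduli of holomorphic polynomials satisfying f − f(z^opt) = Σ_{i=0}^m σ_i^opt g_i with g₀ = 1. Then complementary slackness holds: σ_i^opt(z^opt) g_i(z^opt) = 0 for i = 0, …, m, and (z^opt, σ₁^opt, …, σ_m^opt) is a saddle point of φ(z, σ) = f(z) − Σ_{i=1}^m σ_i(z) g_i(z) over ℂ^n × Σ[z]^m. -/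
/-- `Σ[z]`: real-valued functions on `ℂⁿ` that are finite sums of squared moduli of
holomorphic polynomials. -/
def SOS (n : ℕ) : Set ((Fin n → ℂ) → ℝ) :=
  {s | ∃ (r : ℕ) (p : Fin r → MvPolynomial (Fin n) ℂ),
    ∀ z, s z = ∑ j, ‖MvPolynomial.eval z (p j)‖ ^ 2}

/-- A real-valued complex polynomial: a real-valued function on `ℂⁿ` given by a polynomial
in `z` and `conj z`. -/
def IsRealComplexPoly {n : ℕ} (f : (Fin n → ℂ) → ℝ) : Prop :=
  ∃ P : MvPolynomial (Fin n ⊕ Fin n) ℂ,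
    ∀ z : Fin n → ℂ,
      (f z : ℂ) = MvPolynomial.eval (Sum.elim z fun i => starRingEnd ℂ (z i)) P

/-!
Evaluated at the feasible point `zopt`, the certificate writes `0` as
`σ₀(zopt) + Σ σᵢ(zopt) gᵢ(zopt)`, a sum of nonnegative terms, so every term vanishes. The saddle
inequality in `σ` is then the nonnegativity of `Σ τᵢ(zopt) gᵢ(zopt)`, and the one in `z` is the
certificate read as `f - Σ σᵢ gᵢ = f(zopt) + σ₀ ≥ f(zopt)`.
-/

variable {n m : ℕ}

theorem nonneg_of_mem_SOS {s : (Fin n → ℂ) → ℝ} (hs : s ∈ SOS n) (z : Fin n → ℂ) : 0 ≤ s z := by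
  obtain ⟨r, p, hp⟩ := hs
  rw [hp]
  exact Finset.sum_nonneg fun j _ => sq_nonneg _

theorem sum_SOS_mul_nonneg {τ g : Fin m → (Fin n → ℂ) → ℝ} (hτ : ∀ i, τ i ∈ SOS n)
    {z : Fin n → ℂ} (hz : ∀ i, 0 ≤ g i z) : 0 ≤ ∑ i, τ i z * g i z :=
  Finset.sum_nonneg fun i _ => mul_nonneg (nonneg_of_mem_SOS (hτ i) z) (hz i)

theorem SOS_eq_zero_and_mul_eq_zero_of_add_sum_eq_zero {σ₀ : (Fin n → ℂ) → ℝ}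
    {σ g : Fin m → (Fin n → ℂ) → ℝ} (hσ₀ : σ₀ ∈ SOS n) (hσ : ∀ i, σ i ∈ SOS n)
    {z : Fin n → ℂ} (hz : ∀ i, 0 ≤ g i z) (h : σ₀ z + ∑ i, σ i z * g i z = 0) :
    σ₀ z = 0 ∧ ∀ i, σ i z * g i z = 0 := by
  obtain ⟨h₀, hsum⟩ :=
    (add_eq_zero_iff_of_nonneg (nonneg_of_mem_SOS hσ₀ z) (sum_SOS_mul_nonneg hσ hz)).mp h
  have hterm : ∀ i ∈ Finset.univ, 0 ≤ σ i z * g i z :=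
    fun i _ => mul_nonneg (nonneg_of_mem_SOS (hσ i) z) (hz i)
  exact ⟨h₀, fun i => (Finset.sum_eq_zero_iff_of_nonneg hterm).mp hsum i (Finset.mem_univ i)⟩

theorem stmt_16_general {n m : ℕ} (f : (Fin n → ℂ) → ℝ) (g : Fin m → (Fin n → ℂ) → ℝ)
    (zopt : Fin n → ℂ) (hfeas : ∀ i, 0 ≤ g i zopt)
    (σ₀ : (Fin n → ℂ) → ℝ) (σ : Fin m → (Fin n → ℂ) → ℝ)
    (hσ₀ : σ₀ ∈ SOS n) (hσ : ∀ i, σ i ∈ SOS n)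
    (hdecomp : ∀ z, f z - f zopt = σ₀ z + ∑ i, σ i z * g i z) :
    (σ₀ zopt * 1 = 0 ∧ ∀ i, σ i zopt * g i zopt = 0) ∧
    (∀ τ : Fin m → (Fin n → ℂ) → ℝ, (∀ i, τ i ∈ SOS n) →
        f zopt - ∑ i, τ i zopt * g i zopt ≤ f zopt - ∑ i, σ i zopt * g i zopt) ∧
    (∀ z : Fin n → ℂ,
        f zopt - ∑ i, σ i zopt * g i zopt ≤ f z - ∑ i, σ i z * g i z) := by
  obtain ⟨hσ₀zero, hslack⟩ := SOS_eq_zero_and_mul_eq_zero_of_add_sum_eq_zero hσ₀ hσ hfeas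
    (by linarith [hdecomp zopt])
  have hsum : ∑ i, σ i zopt * g i zopt = 0 := Finset.sum_eq_zero fun i _ => hslack i
  refine ⟨⟨by rw [hσ₀zero, zero_mul], hslack⟩, fun τ hτ => ?_, fun z => ?_⟩
  · linarith [sum_SOS_mul_nonneg hτ hfeas]
  · linarith [hdecomp z, nonneg_of_mem_SOS hσ₀ z]

/-- If `zopt` is a global minimizer of the real-valued complex polynomial `f` over
`K = {z | g i z ≥ 0}` and `σ₀, …, σ_m ∈ Σ[z]` satisfy `f - f(zopt) = σ₀ + Σ σ_i g_i`
(with `g₀ = 1`), then complementary slackness holds: `σ_i(zopt) g_i(zopt) = 0` for all `i`,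
and `(zopt, σ₁, …, σ_m)` is a saddle point of `φ(z, σ) = f(z) - Σ σ_i(z) g_i(z)` over
`ℂⁿ × Σ[z]^m`. -/
theorem stmt_16 {n m : ℕ} (f : (Fin n → ℂ) → ℝ) (g : Fin m → (Fin n → ℂ) → ℝ)
    (hf : IsRealComplexPoly f) (hg : ∀ i, IsRealComplexPoly (g i))
    (zopt : Fin n → ℂ) (hfeas : ∀ i, 0 ≤ g i zopt)
    (hmin : ∀ z : Fin n → ℂ, (∀ i, 0 ≤ g i z) → f zopt ≤ f z)
    (σ₀ : (Fin n → ℂ) → ℝ) (σ : Fin m → (Fin n → ℂ) → ℝ)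
    (hσ₀ : σ₀ ∈ SOS n) (hσ : ∀ i, σ i ∈ SOS n)
    (hdecomp : ∀ z, f z - f zopt = σ₀ z + ∑ i, σ i z * g i z) :
    (σ₀ zopt * 1 = 0 ∧ ∀ i, σ i zopt * g i zopt = 0) ∧
    (∀ τ : Fin m → (Fin n → ℂ) → ℝ, (∀ i, τ i ∈ SOS n) →
        f zopt - ∑ i, τ i zopt * g i zopt ≤ f zopt - ∑ i, σ i zopt * g i zopt) ∧
    (∀ z : Fin n → ℂ,
        f zopt - ∑ i, σ i zopt * g i zopt ≤ f z - ∑ i, σ i z * g i z) :=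
  stmt_16_general f g zopt hfeas σ₀ σ hσ₀ hσ hdecomp
end
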